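/- Let K and M be purely imaginary octonions with |K| = |M| = 1 and K orthogonal to M (Re(K * conj(M)) = 0). Then for every real t, K * exp(Mt) = cos(t)·K + sin(t)·(K*M), this element N(t) := K*exp(Mt) is purely imaginary of norm 1, and K * exp(Mt) = exp((π/2)·N(t)). -/

import Mathlib

/-!
The norm of the Cayley–Dickson double of ℍ is multiplicative, so `N(t) = K * exp(Mt)` has norm
`|K| |exp(Mt)| = 1`. Since `M + conj M = 2 re M`, `re (K * M) = -re (K * conj M) = 0`, which together
with `re K = 0` makes `N(t)` purely imaginary. Finally `exp((π/2) N) = N` for every `N`.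
-/

/-- The octonion algebra `𝕆`, realized as the Cayley–Dickson double of the
real quaternions: pairs `(x, y)` of quaternions with multiplication
`(u, v) * (w, x) = (u*w - x̄*v, x*u + v*w̄)`. -/
structure Octonion : Type where
  x : Quaternion ℝ
  y : Quaternion ℝ

namespace Octonion

noncomputable instance : Add Octonion := ⟨fun a b => ⟨a.x + b.x, a.y + b.y⟩⟩
noncomputable instance : Neg Octonion := ⟨fun a => ⟨-a.x, -a.y⟩⟩
noncomputable instance : Mul Octonion :=
  ⟨fun a b => ⟨a.x * b.x - star b.y * a.y, b.y * a.x + a.y * star b.x⟩⟩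
noncomputable instance : One Octonion := ⟨⟨1, 0⟩⟩
noncomputable instance : SMul ℝ Octonion := ⟨fun r a => ⟨r • a.x, r • a.y⟩⟩

/-- Octonion conjugation. -/
def conj (a : Octonion) : Octonion := ⟨star a.x, -a.y⟩

/-- Real part of an octonion. -/
def re (a : Octonion) : ℝ := a.x.re

/-- Squared norm of an octonion. -/
def normSq (a : Octonion) : ℝ := Quaternion.normSq a.x + Quaternion.normSq a.y

@[ext] lemma ext {a b : Octonion} (hx : a.x = b.x) (hy : a.y = b.y) : a = b := by
  cases a; cases b; simp_all

@[simp] lemma add_x (a b : Octonion) : (a + b).x = a.x + b.x := rfl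
@[simp] lemma add_y (a b : Octonion) : (a + b).y = a.y + b.y := rfl
@[simp] lemma mul_x (a b : Octonion) : (a * b).x = a.x * b.x - star b.y * a.y := rfl
@[simp] lemma mul_y (a b : Octonion) : (a * b).y = b.y * a.x + a.y * star b.x := rfl
@[simp] lemma one_x : (1 : Octonion).x = 1 := rfl
@[simp] lemma one_y : (1 : Octonion).y = 0 := rfl
@[simp] lemma smul_x (r : ℝ) (a : Octonion) : (r • a).x = r • a.x := rfl
@[simp] lemma smul_y (r : ℝ) (a : Octonion) : (r • a).y = r • a.y := rfl
@[simp] lemma conj_x (a : Octonion) : (conj a).x = star a.x := rfl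
@[simp] lemma conj_y (a : Octonion) : (conj a).y = -a.y := rfl

lemma re_add (a b : Octonion) : re (a + b) = re a + re b := rfl

lemma re_smul (r : ℝ) (a : Octonion) : re (r • a) = r * re a := rfl

protected lemma mul_add (a b c : Octonion) : a * (b + c) = a * b + a * c := by
  ext : 1 <;> simp only [mul_x, mul_y, add_x, add_y, star_add] <;> noncomm_ring

protected lemma mul_smul_comm (r : ℝ) (a b : Octonion) : a * (r • b) = r • (a * b) := by
  ext : 1 <;> simp [smul_sub, smul_add]

protected lemma mul_one (a : Octonion) : a * 1 = a := by
  ext : 1 <;> simp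

lemma add_conj (a : Octonion) : a + conj a = (2 * re a) • 1 := by
  ext : 1
  · rw [add_x, conj_x, Quaternion.self_add_star', smul_x, one_x, ← Quaternion.coe_mul_eq_smul,
      mul_one, re]
  · simp

lemma re_mul_add_re_mul_conj (a b : Octonion) :
    re (a * b) + re (a * conj b) = 2 * re a * re b := by
  rw [← re_add, ← Octonion.mul_add, add_conj, Octonion.mul_smul_comm, Octonion.mul_one, re_smul]
  ring

lemma normSq_mul (a b : Octonion) : normSq (a * b) = normSq a * normSq b := by
  simp only [normSq, mul_x, mul_y, Quaternion.normSq_def', Quaternion.re_mul, Quaternion.imI_mul,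
    Quaternion.imJ_mul, Quaternion.imK_mul, Quaternion.re_sub, Quaternion.imI_sub,
    Quaternion.imJ_sub, Quaternion.imK_sub, Quaternion.re_add, Quaternion.imI_add,
    Quaternion.imJ_add, Quaternion.imK_add, Quaternion.re_star, Quaternion.imI_star,
    Quaternion.imJ_star, Quaternion.imK_star]
  ring

end Octonion

/-- For a purely imaginary unit octonion `M`, `exp(tM) := cos t + sin t • M`. -/
noncomputable def expIm (M : Octonion) (t : ℝ) : Octonion :=
  Real.cos t • (1 : Octonion) + Real.sin t • M

lemma mul_expIm (K M : Octonion) (t : ℝ) :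
    K * expIm M t = Real.cos t • K + Real.sin t • (K * M) := by
  rw [expIm, Octonion.mul_add, Octonion.mul_smul_comm, Octonion.mul_smul_comm, Octonion.mul_one]

lemma normSq_expIm {M : Octonion} (hM : Octonion.re M = 0) (hMnorm : Octonion.normSq M = 1)
    (t : ℝ) : Octonion.normSq (expIm M t) = 1 := by
  have h := Real.sin_sq_add_cos_sq t
  simp only [Octonion.re, Octonion.normSq, Quaternion.normSq_def'] at hM hMnorm ⊢
  simp only [expIm, Octonion.add_x, Octonion.add_y, Octonion.smul_x, Octonion.smul_y,
    Octonion.one_x, Octonion.one_y, Quaternion.re_add, Quaternion.imI_add, Quaternion.imJ_add,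
    Quaternion.imK_add, Quaternion.re_smul, Quaternion.imI_smul, Quaternion.imJ_smul,
    Quaternion.imK_smul, Quaternion.re_one, Quaternion.imI_one, Quaternion.imJ_one,
    Quaternion.imK_one, Quaternion.re_zero, Quaternion.imI_zero, Quaternion.imJ_zero,
    Quaternion.imK_zero, smul_eq_mul, hM]
  linear_combination h + Real.sin t ^ 2 * hMnorm - Real.sin t ^ 2 * M.x.re * hM

lemma expIm_pi_div_two (N : Octonion) : expIm N (Real.pi / 2) = N := by
  ext : 1 <;> simp [expIm]

/-- Let `K`, `M` be orthogonal purely imaginary unit octonions. Then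
`K * exp(Mt) = cos t • K + sin t • (K*M)`, the element `N(t) := K * exp(Mt)`
is purely imaginary of norm 1, and `K * exp(Mt) = exp((π/2)·N(t))`. -/
theorem octonion_K_exp (K M : Octonion)
    (hK : Octonion.re K = 0) (hM : Octonion.re M = 0)
    (hKnorm : Octonion.normSq K = 1) (hMnorm : Octonion.normSq M = 1)
    (hKM : Octonion.re (K * Octonion.conj M) = 0) (t : ℝ) :
    K * expIm M t = Real.cos t • K + Real.sin t • (K * M) ∧
    Octonion.re (K * expIm M t) = 0 ∧
    Octonion.normSq (K * expIm M t) = 1 ∧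
    K * expIm M t
      = Real.cos (Real.pi / 2) • (1 : Octonion)
        + Real.sin (Real.pi / 2) • (K * expIm M t) := by
  have hreKM : Octonion.re (K * M) = 0 := by
    have h := Octonion.re_mul_add_re_mul_conj K M
    rwa [hKM, hK, add_zero, mul_zero, zero_mul] at h
  refine ⟨mul_expIm K M t, ?_, ?_, (expIm_pi_div_two _).symm⟩
  · rw [mul_expIm, Octonion.re_add, Octonion.re_smul, Octonion.re_smul, hK, hreKM]
    ring
  · rw [Octonion.normSq_mul, hKnorm, normSq_expIm hM hMnorm, one_mul]
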